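/- Define f, g : ℝ → ℝ by f(x) = −e^{10x} + e^{6x} + e^{4x} and g(x) = −e^{−10x} + e^{−6x} + e^{−4x} (so g(x) = f(−x)), and for n ≥ 0 set vₙ(f) = f⁽ⁿ⁾(0)/n! and vₙ(g) = g⁽ⁿ⁾(0)/n!, the n-th Taylor coefficients at 0. Then v₀(f) = v₀(g) = 1, v₁(f) = v₁(g) = 0, v₂(f) = v₂(g) = −24, while v₃(f) = −120 and v₃(g) = 120; in particular, n = 3 is the least index at which the Taylor coefficients of f and g differ. -/

import Mathlib

/-- `f(x) = −e^{10x} + e^{6x} + e^{4x}`, the normalized bracket of the knotoid `K`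
evaluated at `A = eˣ`. -/
noncomputable def fK (x : ℝ) : ℝ :=
  -Real.exp (10 * x) + Real.exp (6 * x) + Real.exp (4 * x)

/-- `g(x) = −e^{−10x} + e^{−6x} + e^{−4x}`, the corresponding series for the mirror
image `K*`. -/
noncomputable def gK (x : ℝ) : ℝ :=
  -Real.exp (-10 * x) + Real.exp (-6 * x) + Real.exp (-4 * x)

/-- The `n`-th Taylor coefficient at `0` of a function `h : ℝ → ℝ`,
`vₙ(h) = h⁽ⁿ⁾(0)/n!`. -/
noncomputable def taylorCoeff (n : ℕ) (h : ℝ → ℝ) : ℝ :=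
  iteratedDeriv n h 0 / n.factorial

/-!
Mirroring the knotoid replaces `A` by `A⁻¹`, i.e. `x` by `-x`, which multiplies the `n`-th
Taylor coefficient by `(-1)ⁿ`. So `f` and its mirror can only be told apart by an odd
coefficient, and `vₙ(f) = (-10ⁿ + 6ⁿ + 4ⁿ)/n!` vanishes for `n = 1` but not for `n = 3`.
-/

theorem gK_eq_fK_neg (x : ℝ) : gK x = fK (-x) := by
  simp only [gK, fK, neg_mul, mul_neg]

theorem taylorCoeff_comp_neg (n : ℕ) (h : ℝ → ℝ) :
    taylorCoeff n (fun x => h (-x)) = (-1) ^ n * taylorCoeff n h := by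
  simp only [taylorCoeff, iteratedDeriv_comp_neg, neg_zero, smul_eq_mul, mul_div_assoc]

theorem setOf_taylorCoeff_ne_comp_neg (h : ℝ → ℝ) :
    {n | taylorCoeff n h ≠ taylorCoeff n (fun x => h (-x))} =
      {n | Odd n ∧ taylorCoeff n h ≠ 0} := by
  ext n
  simp only [taylorCoeff_comp_neg, Set.mem_ofPred_eq]
  rcases n.even_or_odd with hn | hn
  · simp [hn.neg_one_pow, Nat.not_odd_iff_even.2 hn]
  · simp [hn.neg_one_pow, hn, CharZero.eq_neg_self_iff]

theorem taylorCoeff_fK (n : ℕ) :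
    taylorCoeff n fK = (-10 ^ n + 6 ^ n + 4 ^ n) / n.factorial := by
  unfold taylorCoeff fK
  rw [iteratedDeriv_fun_add (by fun_prop) (by fun_prop), iteratedDeriv_fun_add (by fun_prop)
    (by fun_prop), iteratedDeriv_fun_neg]
  simp only [iteratedDeriv_exp_const_mul, mul_zero, Real.exp_zero, mul_one]

theorem isLeast_odd_taylorCoeff_fK_ne_zero : IsLeast {n | Odd n ∧ taylorCoeff n fK ≠ 0} 3 := by
  refine ⟨⟨by decide, by norm_num [taylorCoeff_fK, Nat.factorial]⟩, fun n ⟨⟨k, hk⟩, hne⟩ => ?_⟩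
  subst hk
  rcases k with _ | k
  · norm_num [taylorCoeff_fK] at hne
  · omega

/-- `g(x) = f(−x)`; the Taylor coefficients satisfy `v₀(f) = v₀(g) = 1`,
`v₁(f) = v₁(g) = 0`, `v₂(f) = v₂(g) = −24`, `v₃(f) = −120`, `v₃(g) = 120`; and
`n = 3` is the least index at which the Taylor coefficients of `f` and `g` differ. -/
theorem v3_distinguishes_knotoid_from_mirror :
    (∀ x : ℝ, gK x = fK (-x)) ∧
    taylorCoeff 0 fK = 1 ∧ taylorCoeff 0 gK = 1 ∧
    taylorCoeff 1 fK = 0 ∧ taylorCoeff 1 gK = 0 ∧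
    taylorCoeff 2 fK = -24 ∧ taylorCoeff 2 gK = -24 ∧
    taylorCoeff 3 fK = -120 ∧ taylorCoeff 3 gK = 120 ∧
    IsLeast {n : ℕ | taylorCoeff n fK ≠ taylorCoeff n gK} 3 := by
  refine ⟨gK_eq_fK_neg, ?_⟩
  rw [show gK = fun x => fK (-x) from funext gK_eq_fK_neg, setOf_taylorCoeff_ne_comp_neg]
  refine ⟨?_, ?_, ?_, ?_, ?_, ?_, ?_, ?_, isLeast_odd_taylorCoeff_fK_ne_zero⟩ <;>
    norm_num [taylorCoeff_comp_neg, taylorCoeff_fK, Nat.factorial]
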